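/- For a k-mer multiset M sampled so densely that dBG(M) is connected and balanced, the optimal compressed text representation consists of a single word of length |M| + k − 1, achieving compression ratio weight(M)/weight(W) = ((k+1)|M| − 1)/(|M| + k − 1), which tends to k + 1 as |M| → ∞. -/

import Mathlib

/-- The multiset of contiguous length-`k` substrings (`k`-mers) of a word. -/
def puff {α : Type} (k : ℕ) (w : List α) : Multiset (List α) :=
  (((List.range (w.length + 1 - k)).map fun i => (w.drop i).take k) : List (List α))

/-- The `k`-mer multiset represented by a multiset of words (multiset union). -/
def puffW {α : Type} (k : ℕ) (W : Multiset (List α)) : Multiset (List α) :=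
  (W.map (puff k)).sum

/-- The weight of a multiset of words: total length plus `|W| − 1` separators. -/
def weight {α : Type} (W : Multiset (List α)) : ℕ :=
  (W.map List.length).sum + Multiset.card W - 1

/-!
Edges of the de Bruijn multigraph are the `k`-mers, each running from its `(k-1)`-prefix to its
`(k-1)`-suffix. A balanced, connected multigraph has an Eulerian circuit (Hierholzer): a trail in a
balanced multigraph can be extended until it closes up, and a closed trail that misses an edge has,
by connectivity, an unused edge leaving one of its vertices; rotating the trail to end there and
extending again gives a longer closed trail. Consecutive `k`-mers of the circuit overlap in `k - 1`
letters, so the circuit spells a word of length `|M| + k - 1` whose `k`-mers are exactly `M`. Any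
other representation `W` has weight `|M| + k|W| - 1 ≥ |M| + k - 1`.
-/

namespace Multigraph

variable {E V : Type*} {s t : E → V}

def IsWalk (s t : E → V) (L : List E) : Prop :=
  L.IsChain fun a b => t a = s b

-- `L ++ L` is a walk exactly when `L` is a walk whose last edge ends where its first one starts.
def IsClosedWalk (s t : E → V) (L : List E) : Prop :=
  IsWalk s t (L ++ L)

theorem isClosedWalk_cons_iff {a : E} {L : List E} :
    IsClosedWalk s t (a :: L) ↔
      IsWalk s t (a :: L) ∧ t ((a :: L).getLast (List.cons_ne_nil a L)) = s a := by
  rw [IsClosedWalk, IsWalk, List.isChain_append]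
  simp [List.getLast?_eq_some_getLast (List.cons_ne_nil a L), IsWalk]

theorem IsClosedWalk.isWalk {L : List E} (hC : IsClosedWalk s t L) : IsWalk s t L :=
  List.IsChain.left_of_append hC

theorem IsWalk.map_source_append {a : E} {L : List E} (hw : IsWalk s t (a :: L)) :
    (a :: L).map s ++ [t ((a :: L).getLast (List.cons_ne_nil a L))] = s a :: (a :: L).map t := by
  induction L generalizing a with
  | nil => rfl
  | cons b L ih =>
    obtain ⟨hab, hw⟩ := List.isChain_cons_cons.mp hw
    rw [List.getLast_cons (List.cons_ne_nil b L)]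
    simp only [List.map_cons, List.cons_append] at ih ⊢
    rw [ih hw, hab]

theorem IsClosedWalk.map_source {L : List E} (hC : IsClosedWalk s t L) :
    (L : Multiset E).map s = (L : Multiset E).map t := by
  rcases L with _ | ⟨a, L⟩
  · rfl
  obtain ⟨hw, hclosed⟩ := isClosedWalk_cons_iff.mp hC
  have h := congrArg (fun l : List V => (l : Multiset V)) hw.map_source_append
  simp only [hclosed, List.map_cons, List.cons_append, Multiset.coe_eq_coe, List.perm_cons] at h
  simpa using (List.perm_append_singleton _ _).symm.trans h

theorem IsClosedWalk.exists_isWalk_append_singleton {C : List E} {x : E}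
    (hC : IsClosedWalk s t C) (hx : x ∈ C) :
    ∃ A, IsWalk s t (A ++ [x]) ∧ (↑(A ++ [x]) : Multiset E) = C := by
  obtain ⟨l₁, l₂, rfl⟩ := List.append_of_mem hx
  refine ⟨l₂ ++ l₁, List.IsChain.infix hC ⟨l₁ ++ [x], l₂, by simp⟩, ?_⟩
  simpa using (List.perm_append_comm (l₁ := l₁ ++ [x]) (l₂ := l₂)).symm

def Adj (s t : E → V) (M : Multiset E) (u v : V) : Prop :=
  ∃ x ∈ M, (s x = u ∧ t x = v) ∨ (s x = v ∧ t x = u)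

theorem iff_of_reflTransGen_adj {M : Multiset E} {P : V → Prop}
    (hP : ∀ x ∈ M, P (s x) ↔ P (t x)) {u v : V} (h : Relation.ReflTransGen (Adj s t M) u v) :
    P u ↔ P v := by
  induction h with
  | refl => rfl
  | tail _ hstep ih =>
    obtain ⟨x, hx, ⟨rfl, rfl⟩ | ⟨rfl, rfl⟩⟩ := hstep
    exacts [ih.trans (hP x hx), ih.trans (hP x hx).symm]

variable [DecidableEq E] {M : Multiset E}

theorem IsWalk.map_source_sub {a : E} {L : List E} (hbal : M.map s = M.map t)
    (hw : IsWalk s t (a :: L)) (hle : ↑(a :: L) ≤ M) :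
    {s a} + (M - ↑(a :: L)).map s =
      {t ((a :: L).getLast (List.cons_ne_nil a L))} + (M - ↑(a :: L)).map t := by
  set C : Multiset E := ↑(a :: L)
  set D := M - C
  have hCD : C + D = M := add_tsub_cancel_of_le hle
  have hC : C.map s + {t ((a :: L).getLast (List.cons_ne_nil a L))} = {s a} + C.map t := by
    rw [Multiset.map_coe, Multiset.map_coe, ← Multiset.coe_singleton, Multiset.coe_add,
      Multiset.singleton_add, Multiset.cons_coe, hw.map_source_append]
  rw [← hCD, Multiset.map_add, Multiset.map_add] at hbal
  apply add_left_cancel (a := C.map t)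
  calc C.map t + ({s a} + D.map s) = C.map s + {t _} + D.map s := by rw [hC]; abel
    _ = C.map t + ({t _} + D.map t) := by rw [add_right_comm, hbal]; abel

theorem IsWalk.exists_isClosedWalk_append {a : E} {L : List E} (hbal : M.map s = M.map t)
    (hw : IsWalk s t (a :: L)) (hle : ↑(a :: L) ≤ M) :
    ∃ L', IsClosedWalk s t (a :: L ++ L') ∧ ((a :: L ++ L' : List E) : Multiset E) ≤ M := by
  by_cases hclosed : t ((a :: L).getLast (List.cons_ne_nil a L)) = s a
  · exact ⟨[], by simpa using isClosedWalk_cons_iff.mpr ⟨hw, hclosed⟩, by simpa using hle⟩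
  set b := (a :: L).getLast (List.cons_ne_nil a L) with hb
  obtain ⟨y, hy, hys⟩ : ∃ y ∈ M - ↑(a :: L), s y = t b := by
    have h := congrArg (t b ∈ ·) (hw.map_source_sub hbal hle)
    simpa [← hb, Ne.symm hclosed, eq_comm] using h
  have hw' : IsWalk s t (a :: (L ++ [y])) := by
    rw [← List.cons_append]
    refine List.IsChain.append hw (List.isChain_singleton y) ?_
    simp [List.getLast?_eq_some_getLast (List.cons_ne_nil a L), ← hb, hys]
  have hle' : (↑(a :: (L ++ [y])) : Multiset E) ≤ M := by
    rw [← List.cons_append, ← Multiset.coe_add]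
    exact (le_tsub_iff_left hle).mp (Multiset.singleton_le.mpr hy)
  have hlen : L.length + 1 < Multiset.card M := by
    simpa using Multiset.card_le_card hle'
  obtain ⟨L', hC, hle''⟩ := hw'.exists_isClosedWalk_append hbal hle'
  exact ⟨y :: L', by simpa using hC, by simpa using hle''⟩
termination_by Multiset.card M - L.length

theorem IsClosedWalk.exists_target_eq_source_of_ne {C : List E} (hbal : M.map s = M.map t)
    (hconn : ∀ m ∈ M, ∀ m' ∈ M, Relation.ReflTransGen (Adj s t M) (s m) (s m'))
    (hC : IsClosedWalk s t C) (hC0 : C ≠ []) (hle : ↑C ≤ M) (hne : ↑C ≠ M) :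
    ∃ x ∈ C, ∃ y ∈ M - ↑C, t x = s y := by
  by_contra! h
  obtain ⟨a, L, rfl⟩ := List.exists_cons_of_ne_nil hC0
  obtain ⟨hw, hclosed⟩ := isClosedWalk_cons_iff.mp hC
  set D := M - ↑(a :: L)
  have hD : D.map s = D.map t := by
    simpa [hclosed] using hw.map_source_sub hbal hle
  have hCs : ∀ x ∈ a :: L, s x ∈ (↑(a :: L) : Multiset E).map t := fun x hx =>
    hC.map_source ▸ Multiset.mem_map_of_mem s hx
  -- The vertices of `C` are then closed under the edges of `M`: an unused edge entering them
  -- would, by balance of the unused edges `D`, give an unused edge leaving them.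
  have hP : ∀ x ∈ M,
      s x ∈ (↑(a :: L) : Multiset E).map t ↔ t x ∈ (↑(a :: L) : Multiset E).map t := by
    intro x hx
    by_cases hxC : x ∈ a :: L
    · exact iff_of_true (hCs x hxC) (Multiset.mem_map_of_mem t hxC)
    have hxD : x ∈ D := Multiset.mem_sub.mpr <| by
      rw [Multiset.count_eq_zero_of_notMem (by simpa using hxC)]
      exact Multiset.count_pos.mpr hx
    refine iff_of_false ?_ ?_
    · rintro hxs
      obtain ⟨c, hc, hcx⟩ := Multiset.mem_map.mp hxs
      exact h c (Multiset.mem_coe.mp hc) x hxD hcx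
    · rintro hxt
      obtain ⟨c, hc, hcx⟩ := Multiset.mem_map.mp hxt
      obtain ⟨y, hy, hyx⟩ := Multiset.mem_map.mp (hD ▸ Multiset.mem_map_of_mem t hxD)
      exact h c (Multiset.mem_coe.mp hc) y hy (hcx.trans hyx.symm)
  obtain ⟨z, hz⟩ := Multiset.exists_mem_of_ne_zero fun hD0 : D = 0 =>
    hne (le_antisymm hle (tsub_eq_zero_iff_le.mp hD0))
  have hzC := (iff_of_reflTransGen_adj hP (hconn a (Multiset.mem_of_le hle (by simp)) z
    (Multiset.mem_of_le (Multiset.sub_le_self _ _) hz))).mp (hCs a (by simp))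
  obtain ⟨c, hc, hcz⟩ := Multiset.mem_map.mp hzC
  exact h c (Multiset.mem_coe.mp hc) z hz hcz

theorem IsClosedWalk.exists_isClosedWalk_coe_eq {C : List E} (hbal : M.map s = M.map t)
    (hconn : ∀ m ∈ M, ∀ m' ∈ M, Relation.ReflTransGen (Adj s t M) (s m) (s m'))
    (hC : IsClosedWalk s t C) (hC0 : C ≠ []) (hle : ↑C ≤ M) :
    ∃ L, IsClosedWalk s t L ∧ (L : Multiset E) = M := by
  by_cases hCM : ↑C = M
  · exact ⟨C, hC, hCM⟩
  obtain ⟨x, hx, y, hy, hxy⟩ := hC.exists_target_eq_source_of_ne hbal hconn hC0 hle hCM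
  obtain ⟨A, hA, hAC⟩ := hC.exists_isWalk_append_singleton hx
  obtain ⟨a, L, hAL⟩ := List.exists_cons_of_ne_nil
    (List.append_ne_nil_of_right_ne_nil (A ++ [x]) (List.cons_ne_nil y []))
  have hw : IsWalk s t (a :: L) := hAL ▸ hA.append (List.isChain_singleton y) (by simpa using hxy)
  have hle' : (↑(a :: L) : Multiset E) ≤ M := by
    rw [← hAL, ← Multiset.coe_add, hAC]
    exact (le_tsub_iff_left hle).mp (Multiset.singleton_le.mpr hy)
  obtain ⟨L', hC', hle''⟩ := hw.exists_isClosedWalk_append hbal hle'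
  have hlenC : C.length = L.length := by
    have h₁ : A.length + 1 = C.length := by simpa using congrArg Multiset.card hAC
    have h₂ : A.length + 2 = L.length + 1 := by simpa using congrArg List.length hAL
    omega
  have hlenM : L.length + L'.length + 1 ≤ Multiset.card M := by
    simpa using Multiset.card_le_card hle''
  exact hC'.exists_isClosedWalk_coe_eq hbal hconn (List.cons_ne_nil _ _) hle''
termination_by Multiset.card M - C.length

theorem exists_isClosedWalk_coe_eq (hbal : M.map s = M.map t)
    (hconn : ∀ m ∈ M, ∀ m' ∈ M, Relation.ReflTransGen (Adj s t M) (s m) (s m'))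
    (hM : M ≠ 0) :
    ∃ L, IsClosedWalk s t L ∧ (L : Multiset E) = M := by
  obtain ⟨e, he⟩ := Multiset.exists_mem_of_ne_zero hM
  obtain ⟨L, hC, hle⟩ := IsWalk.exists_isClosedWalk_append hbal (List.isChain_singleton e)
    (by simpa using he)
  exact hC.exists_isClosedWalk_coe_eq hbal hconn (List.cons_ne_nil _ _) hle

end Multigraph

section DeBruijn

variable {α : Type}

theorem card_puff (k : ℕ) (w : List α) : Multiset.card (puff k w) = w.length + 1 - k := by
  simp [puff]

theorem puff_cons {k : ℕ} {w : List α} (a : α) (h : k ≤ w.length) :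
    puff k (a :: w) = (a :: w).take k ::ₘ puff k w := by
  have : (a :: w).length + 1 - k = (w.length + 1 - k) + 1 := by simp; omega
  rw [puff, puff, this, List.range_succ_eq_map]
  simp [Function.comp_def]

theorem exists_puff_eq_of_isWalk {k : ℕ} (hk : 1 ≤ k) {e : List α} {L : List (List α)}
    (hw : Multigraph.IsWalk List.dropLast List.tail (e :: L))
    (hL : ∀ x ∈ e :: L, x.length = k) :
    ∃ w, puff k w = ↑(e :: L) ∧ w.take k = e ∧ w.length = L.length + k := by
  induction L generalizing e with
  | nil =>
    have he : e.length = k := hL e List.mem_cons_self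
    refine ⟨e, ?_, by simp [← he], by simp [he]⟩
    have : e.length + 1 - k = 1 := by simp [he]
    simp [puff, this, List.take_of_length_le he.le]
  | cons e' L ih =>
    obtain ⟨hee', hw⟩ := List.isChain_cons_cons.mp hw
    obtain ⟨w, hpuff, htake, hlen⟩ := ih hw fun x hx => hL x (List.mem_cons_of_mem e hx)
    obtain ⟨b, bt, rfl⟩ := List.exists_cons_of_ne_nil (List.ne_nil_of_length_pos
      (hL _ List.mem_cons_self ▸ hk))
    have htake' : (b :: w).take k = b :: bt := by
      obtain ⟨j, rfl⟩ := Nat.exists_eq_add_of_le' hk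
      have hbt : bt = e'.dropLast := hee'
      rw [List.take_succ_cons, hbt, List.dropLast_eq_take, hL e' (by simp), ← htake,
        List.take_take]
      simp
    refine ⟨b :: w, ?_, htake', by simp [hlen]; omega⟩
    rw [puff_cons b (by omega), hpuff, htake']
    rfl

theorem card_puffW (k : ℕ) (W : Multiset (List α)) :
    Multiset.card (puffW k W) = (W.map fun u => u.length + 1 - k).sum := by
  rw [puffW, ← Multiset.join, Multiset.card_join, Multiset.map_map]
  exact congrArg _ (Multiset.map_congr rfl fun u _ => card_puff k u)

theorem card_puffW_add_le_weight {k : ℕ} {W : Multiset (List α)} (hW : ∀ u ∈ W, k ≤ u.length)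
    (hW0 : W ≠ 0) : Multiset.card (puffW k W) + k - 1 ≤ weight W := by
  have hsum : (W.map List.length).sum + Multiset.card W =
      Multiset.card (puffW k W) + k * Multiset.card W :=
    calc (W.map List.length).sum + Multiset.card W = (W.map fun u => u.length + 1).sum := by
          simp [Multiset.sum_map_add]
      _ = (W.map fun u => (u.length + 1 - k) + k).sum :=
          congrArg _ (Multiset.map_congr rfl fun u hu => by have := hW u hu; omega)
      _ = Multiset.card (puffW k W) + k * Multiset.card W := by
          simp [Multiset.sum_map_add, card_puffW, mul_comm]
  have := Nat.le_mul_of_pos_right k (Multiset.card_pos.mpr hW0)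
  rw [weight]
  omega

theorem weight_singleton (w : List α) : weight {w} = w.length := by
  simp [weight]

theorem weight_of_forall_length_eq {k : ℕ} {M : Multiset (List α)}
    (hM : ∀ m ∈ M, m.length = k) : weight M = (k + 1) * Multiset.card M - 1 := by
  rw [weight, Multiset.map_congr rfl hM]
  simp only [Multiset.map_const', Multiset.sum_replicate, smul_eq_mul]
  ring_nf

end DeBruijn

theorem exists_sub_lt_div (k : ℕ) {ε : ℚ} (hε : 0 < ε) :
    ∃ N : ℕ, ∀ m : ℕ, N ≤ m →
      (k : ℚ) + 1 - ε < (((k : ℚ) + 1) * (m : ℚ) - 1) / ((m : ℚ) + (k : ℚ) - 1) := by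
  refine ⟨⌈(k : ℚ) ^ 2 / ε⌉₊ + 2, fun m hm => ?_⟩
  have hm' : (k : ℚ) ^ 2 / ε + 1 < m := by
    have := Nat.le_ceil ((k : ℚ) ^ 2 / ε)
    have : ((⌈(k : ℚ) ^ 2 / ε⌉₊ + 2 : ℕ) : ℚ) ≤ m := by exact_mod_cast hm
    push_cast at this
    linarith
  have hkm : (k : ℚ) ^ 2 < ε * (m - 1) := by
    rw [div_add_one hε.ne', div_lt_iff₀ hε] at hm'
    linarith
  have hd : (0 : ℚ) < m + k - 1 := by
    have := div_nonneg (sq_nonneg (k : ℚ)) hε.le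
    linarith [(Nat.cast_nonneg k : (0 : ℚ) ≤ k)]
  rw [lt_div_iff₀ hd]
  nlinarith [(Nat.cast_nonneg k : (0 : ℚ) ≤ k)]

/-- For a `k`-mer multiset `M` sampled so densely that its de Bruijn multigraph is
balanced (each `(k−1)`-word heads as many `k`-mers of `M` as it tails) and connected
(the prefixes of any two `k`-mers are joined by a path in the underlying undirected
graph), the optimal compressed text representation is a single word of length
`|M| + k − 1`, achieving compression ratio
`weight(M)/weight({w}) = ((k+1)|M| − 1)/(|M| + k − 1)`, which tends to `k + 1` as
`|M| → ∞`. -/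
theorem dense_single_word {α : Type} [DecidableEq α] (k : ℕ) (hk : 1 ≤ k)
    (M : Multiset (List α)) (hM : M ≠ 0) (hMk : ∀ m ∈ M, m.length = k)
    (hbal : ∀ u : List α,
      Multiset.countP (fun m => m.dropLast = u) M =
        Multiset.countP (fun m => m.tail = u) M)
    (hconn : ∀ m ∈ M, ∀ m' ∈ M,
      Relation.ReflTransGen
        (fun u v : List α => ∃ x ∈ M,
          (x.dropLast = u ∧ x.tail = v) ∨ (x.dropLast = v ∧ x.tail = u))
        m.dropLast m'.dropLast) :
    (∃ w : List α, puff k w = M ∧ w.length = Multiset.card M + k - 1 ∧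
      (∀ W : Multiset (List α), (∀ u ∈ W, k ≤ u.length) → puffW k W = M →
        weight {w} ≤ weight W) ∧
      (weight M : ℚ) / (weight {w} : ℚ) =
        (((k : ℚ) + 1) * (Multiset.card M : ℚ) - 1) /
          ((Multiset.card M : ℚ) + (k : ℚ) - 1)) ∧
    (∀ ε : ℚ, 0 < ε → ∃ N : ℕ, ∀ m : ℕ, N ≤ m →
      (k : ℚ) + 1 - ε < (((k : ℚ) + 1) * (m : ℚ) - 1) / ((m : ℚ) + (k : ℚ) - 1)) := by
  have hbal' : M.map List.dropLast = M.map List.tail := Multiset.ext.mpr fun u => by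
    simpa [Multiset.count_map, ← Multiset.countP_eq_card_filter, eq_comm] using hbal u
  obtain ⟨L, hC, hLM⟩ := Multigraph.exists_isClosedWalk_coe_eq hbal' hconn hM
  obtain ⟨e, L, rfl⟩ := List.exists_cons_of_ne_nil (l := L) (by rintro rfl; exact hM hLM.symm)
  obtain ⟨w, hw, -, hwlen⟩ :=
    exists_puff_eq_of_isWalk hk hC.isWalk fun x hx => hMk x (hLM ▸ hx)
  have hcard : Multiset.card M = L.length + 1 := by simp [← hLM]
  have hwlen' : w.length = Multiset.card M + k - 1 := by omega
  refine ⟨⟨w, hw.trans hLM, hwlen', fun W hW hWM => ?_, ?_⟩,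
    fun ε hε => exists_sub_lt_div k hε⟩
  · have hW0 : W ≠ 0 := by rintro rfl; exact hM (hWM.symm.trans (by simp [puffW]))
    rw [weight_singleton, hwlen', ← hWM]
    exact card_puffW_add_le_weight hW hW0
  · rw [weight_singleton, hwlen', weight_of_forall_length_eq hMk, Nat.cast_sub (by nlinarith),
      Nat.cast_sub (by omega)]
    push_cast
    ring
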